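/- In a sequence of rooted cluster morphisms f : A(Σ₁) → A(Σ₂), g : A(Σ₂) → A(Σ₃), every (g∘f, Σ₁, Σ₃)-biadmissible sequence (x₁,…,xₙ) is also (f, Σ₁, Σ₂)-biadmissible, and (f(x₁),…,f(xₙ)) is (g, Σ₂, Σ₃)-biadmissible. -/

import Mathlib

open scoped BigOperators
open scoped Classical

noncomputable section

universe u v w x₀

/-- A seed in an ambient field `K`: a cluster of elements of `K`, a distinguished subset
of exchangeable variables, and an exchange matrix indexed by `K` (only the entries on
the cluster are relevant). -/
structure Seed (K : Type u) [Field K] : Type u where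
  cluster : Set K
  ex : Set K
  ex_subset : ex ⊆ cluster
  B : K → K → ℤ

/-- Fomin–Zelevinsky matrix mutation in direction `k`. -/
def mutB {I : Type u} (B : I → I → ℤ) (k : I) : I → I → ℤ := fun y z =>
  if y = k ∨ z = k then -B y z
  else B y z + (|B y k| * B k z + B y k * |B k z|) / 2

namespace Seed

variable {K : Type u} {L : Type v} [Field K] [Field L]

/-- Local finiteness of the exchange matrix of a seed. -/
def LocFinite (S : Seed K) : Prop :=
  ∀ y ∈ S.cluster,
    {z | z ∈ S.cluster ∧ S.B y z ≠ 0}.Finite ∧ {z | z ∈ S.cluster ∧ S.B z y ≠ 0}.Finite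

/-- Skew-symmetrisability witnessed by a family `d` of positive integers. -/
def SkewSymmetrizableWith (S : Seed K) (d : K → ℤ) : Prop :=
  (∀ y ∈ S.cluster, 0 < d y) ∧
    ∀ y ∈ S.cluster, ∀ z ∈ S.cluster, d y * S.B y z = -(d z * S.B z y)

def SkewSymmetrizable (S : Seed K) : Prop := ∃ d, S.SkewSymmetrizableWith d

/-- The new cluster variable created by mutation of `S` in direction `x`:
`x * x' = ∏_{b_{xy} > 0} y ^ (b_{xy}) + ∏_{b_{xy} < 0} y ^ (-b_{xy})`. -/
def mutVar (S : Seed K) (x : K) : K :=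
  ((∏ᶠ y ∈ {y | y ∈ S.cluster ∧ 0 < S.B x y}, y ^ (S.B x y).toNat) +
      ∏ᶠ y ∈ {y | y ∈ S.cluster ∧ S.B x y < 0}, y ^ (-S.B x y).toNat) / x

/-- Mutation of a seed in direction `x`. -/
def mutate (S : Seed K) (x : K) : Seed K where
  cluster := insert (S.mutVar x) (S.cluster \ {x})
  ex := insert (S.mutVar x) (S.ex \ {x})
  ex_subset := Set.insert_subset_insert (Set.diff_subset_diff_left S.ex_subset)
  B := fun y z =>
    mutB S.B x (if y = S.mutVar x then x else y) (if z = S.mutVar x then x else z)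

/-- The correspondence `μ_{x,Σ}` on cluster variables. -/
def mutMap (S : Seed K) (x : K) : K → K := fun y => if y = x then S.mutVar x else y

/-- Iterated mutation along a list of directions. -/
def mutateSeq (S : Seed K) : List K → Seed K
  | [] => S
  | y :: l => (S.mutate y).mutateSeq l

/-- A sequence is `Σ`-admissible if each entry is exchangeable in the seed obtained by
mutating along the previous entries. -/
def Admissible (S : Seed K) : List K → Prop
  | [] => True
  | y :: l => y ∈ S.ex ∧ (S.mutate y).Admissible l

/-- The correspondence `μ_{x_n} ∘ ⋯ ∘ μ_{x_1, Σ}` on cluster variables. -/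
def mutSeqMap (S : Seed K) : List K → K → K
  | [] => id
  | y :: l => (S.mutate y).mutSeqMap l ∘ S.mutMap y

/-- The set of all cluster variables of the rooted cluster algebra of `S`. -/
def clusterVars (S : Seed K) : Set K :=
  ⋃ (l : List K) (_ : S.Admissible l), (S.mutateSeq l).cluster

/-- The rooted cluster algebra of `S`, as a subring (ℤ-subalgebra) of the ambient field. -/
def algebra (S : Seed K) : Subring K := Subring.closure S.clusterVars

/-- Equality of seeds (exchange matrices are compared on the cluster only). -/
def SameSeed (S T : Seed K) : Prop :=
  S.cluster = T.cluster ∧ S.ex = T.ex ∧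
    ∀ y ∈ S.cluster, ∀ z ∈ S.cluster, S.B y z = T.B y z

/-- The opposite seed. -/
def op (S : Seed K) : Seed K := ⟨S.cluster, S.ex, S.ex_subset, fun y z => -S.B y z⟩

/-- The simplification of a seed: all exchange matrix entries between pairs of frozen
variables are set to zero. -/
def simplify (S : Seed K) : Seed K :=
  ⟨S.cluster, S.ex, S.ex_subset, fun y z =>
    if y ∈ S.cluster \ S.ex ∧ z ∈ S.cluster \ S.ex then 0 else S.B y z⟩

/-- The full subseed of `S` on a subset `s` of the cluster. -/
def subseed (S : Seed K) (s : Set K) : Seed K :=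
  ⟨s, S.ex ∩ s, Set.inter_subset_right, S.B⟩

/-- The lower bound `ℤ[x \ ex][ex ∪ ex']` of the cluster algebra. -/
def lowerBound (S : Seed K) : Subring K :=
  Subring.closure (S.cluster ∪ ⋃ y ∈ S.ex, (S.mutate y).ex)

/-- The ring of Laurent polynomials `ℤ[x \ ex][e^{±1}]`. -/
def laurentRing (S : Seed K) (e : Set K) : Subring K :=
  Subring.closure ((S.cluster \ S.ex) ∪ e ∪ (fun a => a⁻¹) '' e)

/-- The upper bound `ℤ[x\ex][ex^{±1}] ∩ ⋂_{y ∈ ex} ℤ[x\ex][μ_y(ex)^{±1}]`. -/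
def upperBound (S : Seed K) : Subring K :=
  S.laurentRing S.ex ⊓ ⨅ y ∈ S.ex, S.laurentRing (S.mutate y).ex

end Seed

/-- An isomorphism of seeds along a map `φ` of ambient fields. -/
def SeedIso {K : Type u} {L : Type v} [Field K] [Field L]
    (S : Seed K) (T : Seed L) (φ : K → L) : Prop :=
  Set.BijOn φ S.cluster T.cluster ∧ Set.BijOn φ S.ex T.ex ∧
    ∀ y ∈ S.cluster, ∀ z ∈ S.cluster, T.B (φ y) (φ z) = S.B y z

def IsIsoSeeds {K : Type u} {L : Type v} [Field K] [Field L]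
    (S : Seed K) (T : Seed L) : Prop :=
  ∃ φ : K → L, SeedIso S T φ

/-- A genuine seed: a countable, algebraically independent cluster generating the
ambient field, with a locally finite skew-symmetrisable exchange matrix. -/
structure IsSeed {K : Type u} [Field K] (S : Seed K) : Prop where
  countable : S.cluster.Countable
  free : AlgebraicIndependent ℤ ((↑) : S.cluster → K)
  ambient : Subfield.closure S.cluster = ⊤
  locFin : S.LocFinite
  skew : S.SkewSymmetrizable

/-- The map on ambient fields underlying a ring homomorphism defined on a subring
(extended by zero outside the subring). -/
def subFn {K : Type u} {L : Type v} [Field K] [Field L] {R : Subring K}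
    (f : R →+* L) : K → L :=
  fun a => if h : a ∈ R then f ⟨a, h⟩ else 0

/-- The map on ambient fields underlying a ring homomorphism between rooted cluster
algebras (extended by zero outside of `A(S)`). -/
def mapFn {K : Type u} {L : Type v} [Field K] [Field L] (S : Seed K) {T : Seed L}
    (f : S.algebra →+* T.algebra) : K → L :=
  fun a => if h : a ∈ S.algebra then (f ⟨a, h⟩ : L) else 0

/-- A sequence is biadmissible when it is admissible for the source seed and its image
is admissible for the target seed. -/
def Biadmissible {K : Type u} {L : Type v} [Field K] [Field L]
    (S : Seed K) (T : Seed L) (g : K → L) (l : List K) : Prop :=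
  S.Admissible l ∧ T.Admissible (l.map g)

/-- The rooted cluster morphism conditions (CM1), (CM2), (CM3) for a ring homomorphism
`f : A(S) →+* A(T)`. -/
structure IsRCM {K : Type u} {L : Type v} [Field K] [Field L]
    (S : Seed K) (T : Seed L) (f : S.algebra →+* T.algebra) : Prop where
  cm1 : ∀ y ∈ S.cluster, mapFn S f y ∈ T.cluster ∪ Set.range ((↑) : ℤ → L)
  cm2 : ∀ y ∈ S.ex, mapFn S f y ∈ T.ex ∪ Set.range ((↑) : ℤ → L)
  cm3 : ∀ l : List K, Biadmissible S T (mapFn S f) l → ∀ y ∈ S.cluster,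
    mapFn S f (S.mutSeqMap l y) = T.mutSeqMap (l.map (mapFn S f)) (mapFn S f y)

/-- The image seed `f(Σ) = (x' ∩ f(x), ex' ∩ f(ex), B'[f(x)])` of a morphism. -/
def imageSeed {K : Type u} {L : Type v} [Field K] [Field L] (S : Seed K) {T : Seed L}
    (f : S.algebra →+* T.algebra) : Seed L :=
  ⟨T.cluster ∩ (mapFn S f '' S.cluster), T.ex ∩ (mapFn S f '' S.ex),
    Set.inter_subset_inter T.ex_subset (Set.image_mono S.ex_subset), T.B⟩

/-- A bundled object of the category of rooted cluster algebras: an ambient field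
together with a seed in it. -/
structure ClusObj : Type (x₀ + 1) where
  carrier : Type x₀
  [fieldStr : Field carrier]
  seed : Seed carrier

attribute [instance] ClusObj.fieldStr

/-- `Δ` separates `s₁` and `s₂` in the seed `S`. -/
def Separates {K : Type u} [Field K] (S : Seed K) (Δ s₁ s₂ : Set K) : Prop :=
  Δ ⊆ S.cluster \ S.ex ∧ S.cluster = s₁ ∪ s₂ ∪ Δ ∧
    Disjoint s₁ s₂ ∧ Disjoint s₁ Δ ∧ Disjoint s₂ Δ ∧
    ∀ y ∈ s₁, ∀ z ∈ s₂, S.B y z = 0 ∧ S.B z y = 0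

/-- Two seeds are glueable along frozen subsets `Δ₁`, `Δ₂` via `φ` when the full
subseeds on `Δ₁` and `Δ₂` are isomorphic along `φ`. -/
def Glueable {K : Type u} {L : Type v} [Field K] [Field L] (S₁ : Seed K) (S₂ : Seed L)
    (Δ₁ : Set K) (Δ₂ : Set L) (φ : K → L) : Prop :=
  Δ₁ ⊆ S₁.cluster \ S₁.ex ∧ Δ₂ ⊆ S₂.cluster \ S₂.ex ∧
    SeedIso (S₁.subseed Δ₁) (S₂.subseed Δ₂) φ

/-- `Sg` is the amalgamated sum of `S₁` and `S₂` along `Δ₁ ≅ Δ₂`, with respect to the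
identifications `e₁`, `e₂` of the ambient variables. -/
structure IsAmalgamatedSum {K : Type u} {L : Type v} {F : Type w}
    [Field K] [Field L] [Field F]
    (S₁ : Seed K) (S₂ : Seed L) (Δ₁ : Set K) (Δ₂ : Set L) (φ : K → L)
    (Sg : Seed F) (e₁ : K → F) (e₂ : L → F) : Prop where
  inj₁ : Set.InjOn e₁ S₁.cluster
  inj₂ : Set.InjOn e₂ S₂.cluster
  compat : ∀ z ∈ Δ₁, e₁ z = e₂ (φ z)
  glueDelta : e₁ '' Δ₁ = e₂ '' Δ₂
  disj₁ : (e₁ '' (S₁.cluster \ Δ₁)) ∩ (e₂ '' S₂.cluster) = ∅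
  disj₂ : (e₂ '' (S₂.cluster \ Δ₂)) ∩ (e₁ '' S₁.cluster) = ∅
  cluster_eq : Sg.cluster = e₁ '' S₁.cluster ∪ e₂ '' S₂.cluster
  ex_eq : Sg.ex = e₁ '' S₁.ex ∪ e₂ '' S₂.ex
  matrix₁ : ∀ y ∈ S₁.cluster, ∀ z ∈ S₁.cluster, Sg.B (e₁ y) (e₁ z) = S₁.B y z
  matrix₂ : ∀ y ∈ S₂.cluster, ∀ z ∈ S₂.cluster, Sg.B (e₂ y) (e₂ z) = S₂.B y z
  matrix₀ : ∀ y ∈ S₁.cluster \ Δ₁, ∀ z ∈ S₂.cluster \ Δ₂,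
    Sg.B (e₁ y) (e₂ z) = 0 ∧ Sg.B (e₂ z) (e₁ y) = 0


section AuxProof

open Algebra Polynomial

variable {K : Type u} [Field K]

private lemma aux_habs (p q : ℤ) :
    |p| * q + p * |q| = 2 * (max p 0 * max q 0 - max (-p) 0 * max (-q) 0) := by
  rcases le_total p 0 with hp | hp <;> rcases le_total q 0 with hq | hq
  · rw [abs_of_nonpos hp, abs_of_nonpos hq, max_eq_right hp, max_eq_right hq,
      max_eq_left (neg_nonneg.2 hp), max_eq_left (neg_nonneg.2 hq)]; ring
  · rw [abs_of_nonpos hp, abs_of_nonneg hq, max_eq_right hp, max_eq_left hq,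
      max_eq_left (neg_nonneg.2 hp), max_eq_right (neg_nonpos.2 hq)]; ring
  · rw [abs_of_nonneg hp, abs_of_nonpos hq, max_eq_left hp, max_eq_right hq,
      max_eq_right (neg_nonpos.2 hp), max_eq_left (neg_nonneg.2 hq)]; ring
  · rw [abs_of_nonneg hp, abs_of_nonneg hq, max_eq_left hp, max_eq_left hq,
      max_eq_right (neg_nonpos.2 hp), max_eq_right (neg_nonpos.2 hq)]; ring

private lemma aux_skewE {du dv dx p q p' q' : ℤ} (hdu : 0 < du) (hdv : 0 < dv) (hdx : 0 < dx)
    (h1 : du * p = -(dx * p')) (h2 : dv * q' = -(dx * q)) :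
    du * (max p 0 * max q 0 - max (-p) 0 * max (-q) 0)
      = -(dv * (max q' 0 * max p' 0 - max (-q') 0 * max (-p') 0)) := by
  rcases lt_trichotomy p 0 with hp | hp | hp
  · have hp' : 0 < p' := by nlinarith
    rcases lt_trichotomy q 0 with hq | hq | hq
    · have hq' : 0 < q' := by nlinarith
      rw [max_eq_right hp.le, max_eq_right hq.le, max_eq_left (by linarith : (0:ℤ) ≤ -p),
        max_eq_left (by linarith : (0:ℤ) ≤ -q), max_eq_left hq'.le, max_eq_left hp'.le,
        max_eq_right (by linarith : -q' ≤ (0:ℤ)), max_eq_right (by linarith : -p' ≤ (0:ℤ))]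
      linear_combination (-q) * h1 + p' * h2
    · have hq' : q' = 0 := by
        have h3 : dv * q' = 0 := by rw [h2, hq]; ring
        rcases mul_eq_zero.1 h3 with h | h
        · exact absurd h (by linarith)
        · exact h
      subst hq hq'
      rw [max_eq_right hp.le, max_eq_left (by linarith : (0:ℤ) ≤ -p)]
      simp
    · have hq' : q' < 0 := by nlinarith
      rw [max_eq_right hp.le, max_eq_left hq.le, max_eq_left (by linarith : (0:ℤ) ≤ -p),
        max_eq_right (by linarith : -q ≤ (0:ℤ)), max_eq_right hq'.le, max_eq_left hp'.le,
        max_eq_left (by linarith : (0:ℤ) ≤ -q'), max_eq_right (by linarith : -p' ≤ (0:ℤ))]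
      ring
  · have hp' : p' = 0 := by
      have h3 : dx * p' = 0 := by rw [← neg_eq_zero, ← h1, hp]; ring
      rcases mul_eq_zero.1 h3 with h | h
      · exact absurd h (by linarith)
      · exact h
    subst hp hp'
    simp
  · have hp' : p' < 0 := by nlinarith
    rcases lt_trichotomy q 0 with hq | hq | hq
    · have hq' : 0 < q' := by nlinarith
      rw [max_eq_left hp.le, max_eq_right hq.le, max_eq_right (by linarith : -p ≤ (0:ℤ)),
        max_eq_left (by linarith : (0:ℤ) ≤ -q), max_eq_left hq'.le, max_eq_right hp'.le,
        max_eq_right (by linarith : -q' ≤ (0:ℤ)), max_eq_left (by linarith : (0:ℤ) ≤ -p')]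
      ring
    · have hq' : q' = 0 := by
        have h3 : dv * q' = 0 := by rw [h2, hq]; ring
        rcases mul_eq_zero.1 h3 with h | h
        · exact absurd h (by linarith)
        · exact h
      subst hq hq'
      rw [max_eq_left hp.le, max_eq_right (by linarith : -p ≤ (0:ℤ))]
      simp
    · have hq' : q' < 0 := by nlinarith
      rw [max_eq_left hp.le, max_eq_left hq.le, max_eq_right (by linarith : -p ≤ (0:ℤ)),
        max_eq_right (by linarith : -q ≤ (0:ℤ)), max_eq_right hq'.le, max_eq_right hp'.le,
        max_eq_left (by linarith : (0:ℤ) ≤ -q'), max_eq_left (by linarith : (0:ℤ) ≤ -p')]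
      linear_combination q * h1 - p' * h2

private lemma aux_algIndep_congr {s t : Set K} (h : s = t)
    (hs : AlgebraicIndependent ℤ ((↑) : s → K)) :
    AlgebraicIndependent ℤ ((↑) : t → K) := by subst h; exact hs

private lemma aux_algIndep_insert {t : Set K} {a : K}
    (ht : AlgebraicIndependent ℤ ((↑) : t → K)) (ha' : a ∉ t)
    (htr : Transcendental (Algebra.adjoin ℤ t) a) :
    AlgebraicIndependent ℤ ((↑) : ↥(insert a t) → K) := by
  convert ((Subtype.range_coe ▸ ht.option_iff_transcendental a).2 htr).comp _
    (Set.subtypeInsertEquivOption ha').injective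
  ext x
  by_cases h : ↑x = a <;> simp [h, Set.subtypeInsertEquivOption]

private lemma aux_transc_of_insert {t : Set K} {a : K} (ha' : a ∉ t)
    (h : AlgebraicIndependent ℤ ((↑) : ↥(insert a t) → K)) :
    Transcendental (Algebra.adjoin ℤ t) a := by
  have ht : AlgebraicIndependent ℤ ((↑) : t → K) := h.mono (Set.subset_insert a t)
  refine (Subtype.range_coe ▸ ht.option_iff_transcendental a).1 ?_
  have h2 := h.comp _ (Set.subtypeInsertEquivOption ha').symm.injective
  have he : (((↑) : ↥(insert a t) → K) ∘ (Set.subtypeInsertEquivOption ha').symm)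
      = fun o : Option t => o.elim a (↑) := by
    funext o
    rcases o with _ | y <;> simp [Set.subtypeInsertEquivOption]
  rwa [he] at h2

private lemma aux_not_int {s : Set K} (hfree : AlgebraicIndependent ℤ ((↑) : s → K))
    {y : K} (hy : y ∈ s) : y ∉ Set.range ((↑) : ℤ → K) := by
  rintro ⟨m, hm⟩
  refine hfree.transcendental (⟨y, hy⟩ : s) ?_
  show IsAlgebraic ℤ y
  rw [← hm, ← eq_intCast (algebraMap ℤ K) m]
  exact isAlgebraic_algebraMap m

private lemma aux_ne_zero {s : Set K} (hfree : AlgebraicIndependent ℤ ((↑) : s → K))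
    {y : K} (hy : y ∈ s) : y ≠ 0 := by
  intro h
  refine hfree.transcendental (⟨y, hy⟩ : s) ?_
  show IsAlgebraic ℤ y
  rw [h]
  exact isAlgebraic_zero

private lemma aux_prod_ne {s : Set K} (hfree : AlgebraicIndependent ℤ ((↑) : s → K))
    (T₁ T₂ : Finset K) (h₁ : ↑T₁ ⊆ s) (h₂ : ↑T₂ ⊆ s) (a b : K → ℕ) :
    (∏ y ∈ T₁, y ^ a y) + (∏ y ∈ T₂, y ^ b y) ≠ 0 := by
  intro h0
  set P₁ : MvPolynomial s ℤ := ∏ y ∈ T₁.attach, (MvPolynomial.X ⟨y.1, h₁ y.2⟩) ^ a y.1 with hP₁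
  set P₂ : MvPolynomial s ℤ := ∏ y ∈ T₂.attach, (MvPolynomial.X ⟨y.1, h₂ y.2⟩) ^ b y.1 with hP₂
  have hev : MvPolynomial.aeval (R := ℤ) ((↑) : s → K) (P₁ + P₂) = MvPolynomial.aeval (R := ℤ) ((↑) : s → K) 0 := by
    rw [map_zero, map_add, hP₁, hP₂, map_prod, map_prod]
    simp only [map_pow, MvPolynomial.aeval_X]
    rw [Finset.prod_attach T₁ (fun y => y ^ a y), Finset.prod_attach T₂ (fun y => y ^ b y)]
    exact h0
  have hzero : P₁ + P₂ = 0 := hfree hev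
  have h2 := congrArg (MvPolynomial.eval (fun _ => (1:ℤ))) hzero
  rw [map_add, map_zero, hP₁, hP₂, map_prod, map_prod] at h2
  simp only [map_pow, MvPolynomial.eval_X, one_pow, Finset.prod_const_one] at h2
  norm_num at h2

private lemma aux_prod_mem_adjoin {t : Set K} (T : Finset K) (hT : ↑T ⊆ t) (e : K → ℕ) :
    (∏ y ∈ T, y ^ e y) ∈ Algebra.adjoin ℤ t :=
  Subalgebra.prod_mem _ fun y hy => Subalgebra.pow_mem _ (Algebra.subset_adjoin (hT hy)) _

private lemma aux_finprod_rep (u : Set K) (e : K → ℕ) :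
    ∃ T : Finset K, ↑T ⊆ u ∧ ∏ᶠ y ∈ u, y ^ e y = ∏ y ∈ T, y ^ e y := by
  by_cases hf : (u ∩ Function.mulSupport fun y => y ^ e y).Finite
  · refine ⟨hf.toFinset, ?_, finprod_mem_eq_prod _ hf⟩
    intro y hy
    exact ((hf.mem_toFinset).1 hy).1
  · refine ⟨∅, by simp, ?_⟩
    rw [finprod_mem_eq_one_of_infinite hf, Finset.prod_empty]

private lemma aux_trans_div {A : Subalgebra ℤ K} {x N : K} (hx : Transcendental A x)
    (hx0 : x ≠ 0) (hN : N ∈ A) (hN0 : N ≠ 0) : Transcendental A (N / x) := by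
  intro halg
  obtain ⟨p, hp0, hpe⟩ := halg
  set n := p.natDegree with hn
  set Nn : A := ⟨N, hN⟩ with hNn
  set q : Polynomial A := ∑ k ∈ Finset.range (n + 1),
    Polynomial.C (p.coeff k * Nn ^ k) * Polynomial.X ^ (n - k) with hqdef
  have hq0 : q ≠ 0 := by
    intro h
    have hc : q.coeff 0 = p.coeff n * Nn ^ n := by
      rw [hqdef, Polynomial.finset_sum_coeff]
      rw [Finset.sum_eq_single n]
      · rw [Nat.sub_self, pow_zero, mul_one, Polynomial.coeff_C_zero]
      · intro k hk hkn
        rw [Polynomial.coeff_C_mul, Polynomial.coeff_X_pow, if_neg, mul_zero]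
        have := Finset.mem_range.1 hk
        omega
      · intro hn'
        exact absurd (Finset.self_mem_range_succ n) hn'
    rw [h, Polynomial.coeff_zero] at hc
    have h1 : p.coeff n ≠ 0 := Polynomial.leadingCoeff_ne_zero.mpr hp0
    have h2 : Nn ^ n ≠ 0 := by
      refine pow_ne_zero _ fun hN' => hN0 ?_
      have := congrArg (Subtype.val) hN'
      simpa [hNn] using this
    exact (mul_ne_zero h1 h2) hc.symm
  have heval : Polynomial.aeval x q = (Polynomial.aeval (N / x) p) * x ^ n := by
    rw [hqdef, map_sum, Polynomial.aeval_eq_sum_range (x := N / x), ← hn, Finset.sum_mul]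
    refine Finset.sum_congr rfl fun k hk => ?_
    have hk' : k ≤ n := by have := Finset.mem_range.1 hk; omega
    rw [map_mul, Polynomial.aeval_C, map_pow, Polynomial.aeval_X, map_mul, map_pow,
      Algebra.smul_def]
    have hNN : algebraMap A K Nn = N := rfl
    rw [hNN]
    have hxk : (N / x) ^ k * x ^ n = N ^ k * x ^ (n - k) := by
      rw [div_pow, div_mul_eq_mul_div, div_eq_iff (pow_ne_zero k hx0), mul_assoc,
        ← pow_add, Nat.sub_add_cancel hk']
    rw [mul_assoc, ← hxk]
    ring
  rw [hpe, zero_mul] at heval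
  exact hx ⟨q, hq0, heval⟩

/-- The invariant: an algebraically independent cluster and a skew-symmetrisable matrix. -/
private def GoodSeed (S : Seed K) : Prop :=
  AlgebraicIndependent ℤ ((↑) : S.cluster → K) ∧ S.SkewSymmetrizable

private lemma aux_B_self {S : Seed K} {d : K → ℤ} (hd : S.SkewSymmetrizableWith d)
    {x : K} (hx : x ∈ S.cluster) : S.B x x = 0 := by
  have h := hd.2 x hx x hx
  have hpos := hd.1 x hx
  have h3 : d x * S.B x x = 0 := by linarith
  rcases mul_eq_zero.1 h3 with h | h
  · exact absurd h (by linarith)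
  · exact h

private lemma good_mutate {S : Seed K} {x : K} (hg : GoodSeed S) (hx : x ∈ S.cluster) :
    GoodSeed (S.mutate x) := by
  obtain ⟨hfree, d, hd⟩ := hg
  have hBxx : S.B x x = 0 := aux_B_self hd hx
  have hx0 : x ≠ 0 := aux_ne_zero hfree hx
  constructor
  · -- algebraic independence of the mutated cluster
    have ht : AlgebraicIndependent ℤ ((↑) : (S.cluster \ {x} : Set K) → K) :=
      hfree.mono Set.diff_subset
    by_cases hx't : S.mutVar x ∈ S.cluster \ {x}
    · show AlgebraicIndependent ℤ
        ((↑) : (insert (S.mutVar x) (S.cluster \ {x}) : Set K) → K)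
      rw [Set.insert_eq_self.mpr hx't]
      exact ht
    · have hxx : x ∉ S.cluster \ {x} := fun h => h.2 rfl
      have hins : (insert x (S.cluster \ {x}) : Set K) = S.cluster := by
        rw [Set.insert_diff_singleton, Set.insert_eq_self.mpr hx]
      have htr : Transcendental (Algebra.adjoin ℤ (S.cluster \ {x})) x :=
        aux_transc_of_insert hxx (aux_algIndep_congr hins.symm hfree)
      obtain ⟨T₁, hT₁, hM₁⟩ := aux_finprod_rep {y | y ∈ S.cluster ∧ 0 < S.B x y}
        (fun y => (S.B x y).toNat)
      obtain ⟨T₂, hT₂, hM₂⟩ := aux_finprod_rep {y | y ∈ S.cluster ∧ S.B x y < 0}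
        (fun y => (-S.B x y).toNat)
      have hu₁ : {y | y ∈ S.cluster ∧ 0 < S.B x y} ⊆ S.cluster \ {x} := by
        rintro y ⟨hy1, hy2⟩
        refine ⟨hy1, fun he => ?_⟩
        rw [Set.mem_singleton_iff] at he
        subst he
        rw [hBxx] at hy2
        exact lt_irrefl 0 hy2
      have hu₂ : {y | y ∈ S.cluster ∧ S.B x y < 0} ⊆ S.cluster \ {x} := by
        rintro y ⟨hy1, hy2⟩
        refine ⟨hy1, fun he => ?_⟩
        rw [Set.mem_singleton_iff] at he
        subst he
        rw [hBxx] at hy2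
        exact lt_irrefl 0 hy2
      set N := (∏ y ∈ T₁, y ^ (S.B x y).toNat) + (∏ y ∈ T₂, y ^ (-S.B x y).toNat) with hNdef
      have hx'N : S.mutVar x = N / x := by
        simp only [Seed.mutVar]
        rw [hM₁, hM₂]
      have hNmem : N ∈ Algebra.adjoin ℤ (S.cluster \ {x}) :=
        Subalgebra.add_mem _ (aux_prod_mem_adjoin T₁ (hT₁.trans hu₁) _)
          (aux_prod_mem_adjoin T₂ (hT₂.trans hu₂) _)
      have hN0 : N ≠ 0 :=
        aux_prod_ne hfree T₁ T₂ (hT₁.trans (hu₁.trans Set.diff_subset))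
          (hT₂.trans (hu₂.trans Set.diff_subset)) _ _
      have htr' : Transcendental (Algebra.adjoin ℤ (S.cluster \ {x})) (S.mutVar x) := by
        rw [hx'N]
        exact aux_trans_div htr hx0 hNmem hN0
      exact aux_algIndep_insert ht hx't htr'
  · -- skew-symmetrisability of the mutated seed
    refine ⟨fun w => if w = S.mutVar x then d x else d w, fun w hw => ?_, fun y hy z hz => ?_⟩
    · show 0 < if w = S.mutVar x then d x else d w
      by_cases h : w = S.mutVar x
      · rw [if_pos h]; exact hd.1 x hx
      · rw [if_neg h]
        rcases Set.mem_insert_iff.1 hw with h' | hw'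
        · exact absurd h' h
        · exact hd.1 w hw'.1
    · have hyc : (if y = S.mutVar x then x else y) ∈ S.cluster := by
        by_cases h : y = S.mutVar x
        · rw [if_pos h]; exact hx
        · rw [if_neg h]
          exact ((Set.mem_insert_iff.1 hy).resolve_left h).1
      have hzc : (if z = S.mutVar x then x else z) ∈ S.cluster := by
        by_cases h : z = S.mutVar x
        · rw [if_pos h]; exact hx
        · rw [if_neg h]
          exact ((Set.mem_insert_iff.1 hz).resolve_left h).1
      have hdy : (if y = S.mutVar x then d x else d y) = d (if y = S.mutVar x then x else y) := by
        by_cases h : y = S.mutVar x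
        · rw [if_pos h, if_pos h]
        · rw [if_neg h, if_neg h]
      have hdz : (if z = S.mutVar x then d x else d z) = d (if z = S.mutVar x then x else z) := by
        by_cases h : z = S.mutVar x
        · rw [if_pos h, if_pos h]
        · rw [if_neg h, if_neg h]
      show (if y = S.mutVar x then d x else d y) *
          mutB S.B x (if y = S.mutVar x then x else y) (if z = S.mutVar x then x else z)
        = -((if z = S.mutVar x then d x else d z) *
          mutB S.B x (if z = S.mutVar x then x else z) (if y = S.mutVar x then x else y))
      rw [hdy, hdz]
      set u := if y = S.mutVar x then x else y with hu
      set v := if z = S.mutVar x then x else z with hv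
      simp only [mutB]
      by_cases hc : u = x ∨ v = x
      · rw [if_pos hc, if_pos (Or.symm hc)]
        have hs := hd.2 u hyc v hzc
        linear_combination -hs
      · rw [if_neg hc, if_neg (fun h => hc (Or.symm h))]
        have e1 : (|S.B u x| * S.B x v + S.B u x * |S.B x v|) / 2
            = max (S.B u x) 0 * max (S.B x v) 0 - max (-S.B u x) 0 * max (-S.B x v) 0 := by
          rw [aux_habs]
          exact Int.mul_ediv_cancel_left _ two_ne_zero
        have e2 : (|S.B v x| * S.B x u + S.B v x * |S.B x u|) / 2
            = max (S.B v x) 0 * max (S.B x u) 0 - max (-S.B v x) 0 * max (-S.B x u) 0 := by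
          rw [aux_habs]
          exact Int.mul_ediv_cancel_left _ two_ne_zero
        rw [e1, e2]
        have hs := hd.2 u hyc v hzc
        have hE := aux_skewE (hd.1 u hyc) (hd.1 v hzc) (hd.1 x hx)
          (hd.2 u hyc x hx) (hd.2 v hzc x hx)
        linear_combination hs + hE

private lemma adm_append (S : Seed K) (l₁ l₂ : List K) :
    S.Admissible (l₁ ++ l₂) ↔ S.Admissible l₁ ∧ (S.mutateSeq l₁).Admissible l₂ := by
  induction l₁ generalizing S with
  | nil => simp [Seed.Admissible, Seed.mutateSeq]
  | cons y l ih =>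
    show (y ∈ S.ex ∧ (S.mutate y).Admissible (l ++ l₂)) ↔ _
    rw [ih]
    show _ ↔ (y ∈ S.ex ∧ (S.mutate y).Admissible l) ∧ ((S.mutate y).mutateSeq l).Admissible l₂
    tauto

private lemma mutMap_image_ex (S : Seed K) {y : K} (hy : y ∈ S.ex) :
    S.mutMap y '' S.ex = (S.mutate y).ex := by
  ext z
  simp only [Seed.mutate, Seed.mutMap, Set.mem_image, Set.mem_insert_iff, Set.mem_diff,
    Set.mem_singleton_iff]
  constructor
  · rintro ⟨w, hw, rfl⟩
    by_cases h : w = y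
    · rw [if_pos h]; exact Or.inl rfl
    · rw [if_neg h]; exact Or.inr ⟨hw, h⟩
  · rintro (rfl | ⟨hz, hne⟩)
    · exact ⟨y, hy, if_pos rfl⟩
    · exact ⟨z, hz, if_neg hne⟩

private lemma ex_mutateSeq (S : Seed K) (l : List K) (hl : S.Admissible l) :
    (S.mutateSeq l).ex = S.mutSeqMap l '' S.ex := by
  induction l generalizing S with
  | nil => simp [Seed.mutateSeq, Seed.mutSeqMap]
  | cons y l ih =>
    obtain ⟨hy, hl'⟩ := hl
    show ((S.mutate y).mutateSeq l).ex = ((S.mutate y).mutSeqMap l ∘ S.mutMap y) '' S.ex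
    rw [Set.image_comp, mutMap_image_ex S hy, ih _ hl']

private lemma good_mutateSeq {S : Seed K} (hg : GoodSeed S) {l : List K}
    (hl : S.Admissible l) : GoodSeed (S.mutateSeq l) := by
  induction l generalizing S with
  | nil => exact hg
  | cons y l ih => exact ih (good_mutate hg (S.ex_subset hl.1)) hl.2

private lemma mutSeqMap_int {S : Seed K} (hg : GoodSeed S) {l : List K}
    (hl : S.Admissible l) {c : K} (hc : c ∈ Set.range ((↑) : ℤ → K)) :
    S.mutSeqMap l c = c := by
  induction l generalizing S with
  | nil => rfl
  | cons y l ih =>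
    have hyc : c ≠ y := fun h => aux_not_int hg.1 (S.ex_subset hl.1) (h ▸ hc)
    show (S.mutate y).mutSeqMap l (S.mutMap y c) = c
    have : S.mutMap y c = c := by
      simp only [Seed.mutMap]
      rw [if_neg hyc]
    rw [this]
    exact ih (good_mutate hg (S.ex_subset hl.1)) hl.2

variable {L : Type v} {M : Type w} [Field L] [Field M]

private lemma aux_mapFn_comp (S₁ : Seed K) (S₂ : Seed L) {S₃ : Seed M}
    (f : S₁.algebra →+* S₂.algebra) (g : S₂.algebra →+* S₃.algebra) :
    mapFn S₁ (g.comp f) = mapFn S₂ g ∘ mapFn S₁ f := by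
  funext a
  by_cases h : a ∈ S₁.algebra
  · simp only [mapFn, dif_pos h, Function.comp_apply, RingHom.comp_apply]
    rw [dif_pos (f ⟨a, h⟩).2]
  · simp only [mapFn, dif_neg h, Function.comp_apply]
    rw [dif_pos (Subring.zero_mem S₂.algebra)]
    have h0 : (⟨0, Subring.zero_mem S₂.algebra⟩ : S₂.algebra) = 0 := rfl
    rw [h0, map_zero]
    rfl

private lemma aux_mapFn_intCast (S₂ : Seed L) {S₃ : Seed M}
    (g : S₂.algebra →+* S₃.algebra) (m : ℤ) : mapFn S₂ g ((m : ℤ) : L) = ((m : ℤ) : M) := by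
  have hm : ((m : ℤ) : L) ∈ S₂.algebra := intCast_mem S₂.algebra m
  simp only [mapFn, dif_pos hm]
  have h0 : (⟨((m : ℤ) : L), hm⟩ : S₂.algebra) = ((m : ℤ) : S₂.algebra) := by
    ext; simp
  rw [h0, map_intCast]
  simp

end AuxProof

/-- every `(g∘f)`-biadmissible sequence is `f`-biadmissible, and its image
under `f` is `g`-biadmissible. -/
theorem biadmissible_of_comp {K : Type u} {L : Type v} {M : Type w}
    [Field K] [Field L] [Field M]
    (S₁ : Seed K) (S₂ : Seed L) (S₃ : Seed M)
    (h₁ : IsSeed S₁) (h₂ : IsSeed S₂) (h₃ : IsSeed S₃)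
    (f : S₁.algebra →+* S₂.algebra) (g : S₂.algebra →+* S₃.algebra)
    (hf : IsRCM S₁ S₂ f) (hg : IsRCM S₂ S₃ g)
    (l : List K) (hl : Biadmissible S₁ S₃ (mapFn S₁ (g.comp f)) l) :
    Biadmissible S₁ S₂ (mapFn S₁ f) l ∧
      Biadmissible S₂ S₃ (mapFn S₂ g) (l.map (mapFn S₁ f)) := by
  classical
  have hcomp : mapFn S₁ (g.comp f) = mapFn S₂ g ∘ mapFn S₁ f := aux_mapFn_comp S₁ S₂ f g
  rw [hcomp] at hl
  have good2 : GoodSeed S₂ := ⟨h₂.free, h₂.skew⟩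
  have good3 : GoodSeed S₃ := ⟨h₃.free, h₃.skew⟩
  have key : ∀ l : List K, Biadmissible S₁ S₃ (mapFn S₂ g ∘ mapFn S₁ f) l →
      S₂.Admissible (l.map (mapFn S₁ f)) := by
    intro l
    induction l using List.reverseRecOn with
    | nil => intro _; trivial
    | append_singleton l' z ih =>
      intro hl
      obtain ⟨h1, h3⟩ := hl
      rw [List.map_append] at h3
      have h1' : S₁.Admissible l' := ((adm_append S₁ l' [z]).1 h1).1
      have hz : z ∈ (S₁.mutateSeq l').ex := (((adm_append S₁ l' [z]).1 h1).2).1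
      have h3' : S₃.Admissible (l'.map (mapFn S₂ g ∘ mapFn S₁ f)) :=
        ((adm_append S₃ _ _).1 h3).1
      have hgfz : (mapFn S₂ g ∘ mapFn S₁ f) z
          ∈ (S₃.mutateSeq (l'.map (mapFn S₂ g ∘ mapFn S₁ f))).ex :=
        (((adm_append S₃ _ _).1 h3).2).1
      have ih' : S₂.Admissible (l'.map (mapFn S₁ f)) := ih ⟨h1', h3'⟩
      have hbf : Biadmissible S₁ S₂ (mapFn S₁ f) l' := ⟨h1', ih'⟩
      rw [ex_mutateSeq S₁ l' h1'] at hz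
      obtain ⟨w, hw, hwz⟩ := hz
      have hFz : mapFn S₁ f z = S₂.mutSeqMap (l'.map (mapFn S₁ f)) (mapFn S₁ f w) := by
        rw [← hwz]
        exact hf.cm3 l' hbf w (S₁.ex_subset hw)
      have hFzex : mapFn S₁ f z ∈ (S₂.mutateSeq (l'.map (mapFn S₁ f))).ex := by
        rcases hf.cm2 w hw with hFw | hFw
        · rw [ex_mutateSeq S₂ _ ih', hFz]
          exact ⟨mapFn S₁ f w, hFw, rfl⟩
        · exfalso
          have hFzc : mapFn S₁ f z = mapFn S₁ f w := by
            rw [hFz, mutSeqMap_int good2 ih' hFw]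
          obtain ⟨m, hm⟩ := hFw
          have hint : (mapFn S₂ g ∘ mapFn S₁ f) z ∈ Set.range ((↑) : ℤ → M) := by
            refine ⟨m, ?_⟩
            have : (mapFn S₂ g ∘ mapFn S₁ f) z = mapFn S₂ g ((m : ℤ) : L) := by
              simp only [Function.comp_apply, hFzc, ← hm]
            rw [this, aux_mapFn_intCast]
          have good3' := good_mutateSeq good3 h3'
          exact aux_not_int good3'.1 ((S₃.mutateSeq _).ex_subset hgfz) hint
      rw [List.map_append]
      refine (adm_append S₂ _ _).2 ⟨ih', ?_⟩
      exact ⟨hFzex, trivial⟩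
  have hadm2 : S₂.Admissible (l.map (mapFn S₁ f)) := key l hl
  refine ⟨⟨hl.1, hadm2⟩, hadm2, ?_⟩
  have h3 := hl.2
  rwa [List.map_map]
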